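/- Let Y be the n×n upper-triangular matrix of indeterminates (with y_{ij} for i ≤ j and 0 otherwise), and let R, S ⊆ [n] with |R| = |S|. Then det(Y_S^R) ≠ 0 if and only if R ≤ S, where Y_S^R is the submatrix of Y with rows R and columns S. -/
import Mathlib

open MvPolynomial in
theorem det_aux_strictMono {n m : ℕ} (r s : Fin m → Fin n)
    (hr : StrictMono r) (hs : StrictMono s) :
    (Matrix.of fun a b : Fin m =>
        if r a ≤ s b then (MvPolynomial.X (r a, s b) : MvPolynomial (Fin n × Fin n) ℂ)
        else 0).det ≠ 0 ↔ ∀ k : Fin m, r k ≤ s k := by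
  classical
  constructor
  · intro hdet
    by_contra hk
    push_neg at hk
    obtain ⟨k, hk⟩ := hk
    apply hdet
    rw [Matrix.det_apply]
    apply Finset.sum_eq_zero
    intro σ _
    have hex : ∃ i, ¬ (r (σ i) ≤ s i) := by
      by_contra hall
      push_neg at hall
      have hmap : ∀ i ∈ Finset.Iic k, σ i ∈ Finset.Iio k := by
        intro i hi
        simp only [Finset.mem_Iic] at hi
        simp only [Finset.mem_Iio]
        have h1 : r (σ i) < r k :=
          lt_of_le_of_lt ((hall i).trans (hs.monotone hi)) hk
        exact hr.lt_iff_lt.mp h1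
      have hcard := Finset.card_le_card_of_injOn σ hmap (σ.injective.injOn)
      rw [Fin.card_Iio, Fin.card_Iic] at hcard
      omega
    obtain ⟨i, hi⟩ := hex
    rw [Finset.prod_eq_zero (Finset.mem_univ i)]
    · simp
    · simp only [Matrix.of_apply, if_neg hi]
  · intro h hdet
    set f : Fin n × Fin n → ℂ := fun p => if ∃ a : Fin m, (r a, s a) = p then 1 else 0 with hf
    have hmapdet := congrArg (MvPolynomial.aeval f) hdet
    rw [map_zero, AlgHom.map_det, AlgHom.mapMatrix_apply] at hmapdet
    have hone : (Matrix.of fun a b : Fin m =>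
        if r a ≤ s b then (MvPolynomial.X (r a, s b) : MvPolynomial (Fin n × Fin n) ℂ)
        else 0).map (MvPolynomial.aeval f) = 1 := by
      ext a b
      simp only [Matrix.map_apply, Matrix.of_apply]
      by_cases hab : a = b
      · subst hab
        rw [if_pos (h a), MvPolynomial.aeval_X, Matrix.one_apply_eq]
        simp only [hf]
        rw [if_pos ⟨a, rfl⟩]
      · rw [Matrix.one_apply_ne hab]
        by_cases hle : r a ≤ s b
        · rw [if_pos hle, MvPolynomial.aeval_X]
          simp only [hf]
          rw [if_neg]
          rintro ⟨c, hc⟩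
          have h1 : r c = r a := congrArg Prod.fst hc
          have h2 : s c = s b := congrArg Prod.snd hc
          exact hab (hr.injective h1 ▸ hs.injective h2)
        · rw [if_neg hle, map_zero]
    rw [hone, Matrix.det_one] at hmapdet
    exact one_ne_zero hmapdet

/-- Let `Y` be the `n × n` generic upper-triangular matrix, with indeterminate `y_{ij}`
in position `(i,j)` for `i ≤ j` and `0` otherwise.  For `R, S ⊆ [n]` with `|R| = |S| = m`,
the determinant of the submatrix `Y_S^R` (rows `R`, columns `S`) is nonzero if and only if
the `k`-th least element of `R` is at most the `k`-th least element of `S` for all `k`. -/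
theorem det_submatrix_ne_zero_iff {n m : ℕ} (R S : Finset (Fin n))
    (hR : R.card = m) (hS : S.card = m) :
    (Matrix.of fun a b : Fin m =>
        if ((R.orderIsoOfFin hR a : Fin n) ≤ (S.orderIsoOfFin hS b : Fin n)) then
          (MvPolynomial.X ((R.orderIsoOfFin hR a : Fin n), (S.orderIsoOfFin hS b : Fin n)) :
            MvPolynomial (Fin n × Fin n) ℂ)
        else 0).det ≠ 0 ↔
      ∀ k : Fin m, (R.orderIsoOfFin hR k : Fin n) ≤ (S.orderIsoOfFin hS k : Fin n) := by
  exact det_aux_strictMono (fun a => (R.orderIsoOfFin hR a : Fin n))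
    (fun a => (S.orderIsoOfFin hS a : Fin n))
    (fun a b hab => Subtype.coe_lt_coe.mpr ((R.orderIsoOfFin hR).strictMono hab))
    (fun a b hab => Subtype.coe_lt_coe.mpr ((S.orderIsoOfFin hS).strictMono hab))
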